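/- Let 1 < p ≤ ∞ and 1/p + 1/p' = 1. There exists a constant c_p > 0, depending only on p, such that for every n ∈ ℕ and every trigonometric polynomial t_{n−1} of degree at most n−1: ‖(V_{2n} − V_n) − t_{n−1}‖_p ≥ c_p·n^{1/p'}, where ‖f‖_p = (∫_{−π}^{π}|f(t)|^p dt)^{1/p} for p < ∞ and ‖f‖_∞ = ess sup |f|. -/

import Mathlib

open Real Finset MeasureTheory

/-- The Dirichlet kernel `D_k(t) = 1/2 + Σ_{ν=1}^{k} cos(νt)`. -/
noncomputable def dirichletK (k : ℕ) (t : ℝ) : ℝ :=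
  1 / 2 + ∑ ν ∈ Finset.Icc 1 k, Real.cos ((ν : ℝ) * t)

/-- The de la Vallée Poussin kernel `V_m(t) = (1/m) Σ_{k=m}^{2m−1} D_k(t)`. -/
noncomputable def vallee (m : ℕ) (t : ℝ) : ℝ :=
  (1 / (m : ℝ)) * ∑ k ∈ Finset.Icc m (2 * m - 1), dirichletK k t

/-- A trigonometric polynomial of degree at most `m`:
`T(x) = a₀/2 + Σ_{k=1}^{m} (a_k cos kx + b_k sin kx)`. -/
def IsTrigPoly (m : ℕ) (T : ℝ → ℝ) : Prop :=
  ∃ a b : ℕ → ℝ, ∀ x : ℝ,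
    T x = a 0 / 2 + ∑ k ∈ Finset.Icc 1 m, (a k * Real.cos ((k : ℝ) * x) + b k * Real.sin ((k : ℝ) * x))

/-- The `L_q` norm (`q ∈ [1,∞]`, extended-real exponent) of a function over one period:
for finite `q` it is `(∫_{−π}^{π}|f|^q)^{1/q}`, for `q = ∞` the essential sup of `|f|`. -/
noncomputable def qnorm (q : ENNReal) (f : ℝ → ℝ) : ℝ :=
  (eLpNorm f q (volume.restrict (Set.Ioc (-π) π))).toReal

/-!
Write `F = V_{2n} − V_n = ∑_{n<ν<4n} c_ν cos νt`; the coefficients vanish up to frequency `n`,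
so `F` is orthogonal to every `T` of degree `< n`, and `∫ (F − T) F = π ∑ c_ν² ≥ π n / 4`
because `c_ν ≥ 1/2` for `2n ≤ ν ≤ 3n`. Hölder bounds the left side by `‖F − T‖_p ‖F‖_{p'}`, and
`‖F‖_{p'} ≤ ‖F‖_∞^{1/p} ‖F‖_1^{1/p'} ≤ (6n)^{1/p} (6π)^{1/p'}` since `|V_m| ≤ 2m` and
`‖V_m‖_1 ≤ 3π`, the latter by positivity of the Fejér kernel `∑_{k<m} D_k`.
Hence `‖F − T‖_p ≥ (π^{1/p} / 24) n^{1/p'}`.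
-/

open scoped ENNReal

section Lp

variable {α : Type*} [MeasurableSpace α] {μ : Measure α}

theorem integral_mul_le_toReal_eLpNorm_mul_toReal_eLpNorm {p q : ℝ≥0∞} [p.HolderConjugate q]
    {f g : α → ℝ} (hf : MemLp f p μ) (hg : MemLp g q μ) :
    ∫ x, f x * g x ∂μ ≤ (eLpNorm f p μ).toReal * (eLpNorm g q μ).toReal := by
  have hHolder : eLpNorm (fun x => f x * g x) 1 μ ≤ eLpNorm f p μ * eLpNorm g q μ := by
    simpa using eLpNorm_le_eLpNorm_mul_eLpNorm'_of_norm hf.1 hg.1 (fun a b => a * b) 1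
      (ae_of_all _ fun x => by simp)
  calc ∫ x, f x * g x ∂μ ≤ ∫ x, ‖f x * g x‖ ∂μ :=
        (Real.le_norm_self _).trans (norm_integral_le_integral_norm _)
    _ = (eLpNorm (fun x => f x * g x) 1 μ).toReal := by
        rw [integral_norm_eq_lintegral_enorm (f := fun x => f x * g x) (hf.1.mul hg.1),
          eLpNorm_one_eq_lintegral_enorm]
    _ ≤ (eLpNorm f p μ * eLpNorm g q μ).toReal :=
        ENNReal.toReal_mono (ENNReal.mul_ne_top hf.2.ne hg.2.ne) hHolder
    _ = (eLpNorm f p μ).toReal * (eLpNorm g q μ).toReal := ENNReal.toReal_mul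

theorem toReal_eLpNorm_le_of_norm_le_of_integral_norm_le [IsFiniteMeasure μ] {f : α → ℝ}
    (hf : AEStronglyMeasurable f μ) {q M L : ℝ} (hq : 1 ≤ q) (hM₀ : 0 ≤ M)
    (hM : ∀ᵐ x ∂μ, ‖f x‖ ≤ M) (hL : ∫ x, ‖f x‖ ∂μ ≤ L) :
    (eLpNorm f (ENNReal.ofReal q) μ).toReal ≤ M ^ (1 - 1 / q) * L ^ (1 / q) := by
  have hq₀ : 0 < q := by linarith
  have hL₀ : 0 ≤ L := (integral_nonneg fun _ => norm_nonneg _).trans hL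
  have hpow : ∀ᵐ x ∂μ, ‖f x‖ ^ q ≤ M ^ (q - 1) * ‖f x‖ := by
    filter_upwards [hM] with x hx
    calc ‖f x‖ ^ q = ‖f x‖ ^ (q - 1) * ‖f x‖ ^ (1 : ℝ) := by
          rw [← rpow_add' (norm_nonneg _) (by simp [hq₀.ne']), sub_add_cancel]
      _ ≤ M ^ (q - 1) * ‖f x‖ := by
          rw [rpow_one]
          gcongr
  have hint : ∫ x, ‖f x‖ ^ q ∂μ ≤ M ^ (q - 1) * L :=
    calc ∫ x, ‖f x‖ ^ q ∂μ ≤ ∫ x, M ^ (q - 1) * ‖f x‖ ∂μ :=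
          integral_mono_of_nonneg (ae_of_all _ fun _ => by positivity)
            ((Integrable.of_bound hf M hM).norm.const_mul _) hpow
      _ ≤ M ^ (q - 1) * L := by
          rw [integral_const_mul]
          gcongr
  rw [(MemLp.of_bound hf M hM).eLpNorm_eq_integral_rpow_norm (by simpa using hq₀)
      ENNReal.ofReal_ne_top, ENNReal.toReal_ofReal (by positivity), ENNReal.toReal_ofReal hq₀.le]
  calc (∫ x, ‖f x‖ ^ q ∂μ) ^ q⁻¹ ≤ (M ^ (q - 1) * L) ^ q⁻¹ :=
        rpow_le_rpow (integral_nonneg fun _ => by positivity) hint (by positivity)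
    _ = M ^ (1 - 1 / q) * L ^ (1 / q) := by
        rw [mul_rpow (by positivity) hL₀, ← rpow_mul hM₀, one_div]
        congr 2
        field_simp

end Lp

theorem Continuous.memLp_restrict_Ioc {E : Type*} [NormedAddCommGroup E] {f : ℝ → E}
    (hf : Continuous f) (p : ℝ≥0∞) (a b : ℝ) : MemLp f p (volume.restrict (Set.Ioc a b)) := by
  obtain ⟨C, hC⟩ := (isCompact_Icc (a := a) (b := b)).exists_bound_of_continuousOn hf.continuousOn
  exact MemLp.of_bound hf.aestronglyMeasurable C
    (ae_restrict_of_forall_mem measurableSet_Ioc fun x hx => hC x (Set.Ioc_subset_Icc_self hx))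

theorem ENNReal.one_div_toReal_lt_one {p : ℝ≥0∞} (hp : 1 < p) : 1 / p.toReal < 1 := by
  rcases eq_or_ne p ⊤ with rfl | hp_top
  · simp
  · rw [div_lt_one (ENNReal.toReal_pos (by positivity) hp_top)]
    simpa using (ENNReal.toReal_lt_toReal ENNReal.one_ne_top hp_top).mpr hp

theorem one_le_of_one_div_toReal_add_one_div_eq_one {p : ℝ≥0∞} {p' : ℝ} (hp : 1 < p)
    (hpp' : 1 / p.toReal + 1 / p' = 1) : 1 ≤ p' := by
  have := ENNReal.one_div_toReal_lt_one hp
  have hp' : 0 < p' := one_div_pos.mp (by linarith)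
  exact (div_le_one hp').mp (by linarith [one_div_nonneg.mpr p.toReal_nonneg])

-- For `p = ∞` the hypothesis reads `1 / 0 + 1 / p' = 1` with Lean's `1 / 0 = 0`, forcing `p' = 1`.
theorem ENNReal.holderConjugate_ofReal {p : ℝ≥0∞} {p' : ℝ} (hp : 1 < p)
    (hpp' : 1 / p.toReal + 1 / p' = 1) : p.HolderConjugate (ENNReal.ofReal p') := by
  have hp' : 0 < p' := by linarith [one_le_of_one_div_toReal_add_one_div_eq_one hp hpp']
  rw [ENNReal.holderConjugate_iff, ← ENNReal.ofReal_inv_of_pos hp',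
    ← ENNReal.ofReal_toReal (ENNReal.inv_ne_top.mpr (by positivity)), ENNReal.toReal_inv,
    ← ENNReal.ofReal_add (by positivity) (by positivity)]
  simpa using hpp'

theorem Real.rpow_mul_rpow_of_add_eq_one {x a b : ℝ} (hx : 0 < x) (hab : a + b = 1) :
    x ^ a * x ^ b = x := by
  rw [← rpow_add hx, hab, rpow_one]

theorem Function.Odd.intervalIntegral_eq_zero {f : ℝ → ℝ} (hf : Function.Odd f)
    (a : ℝ) : ∫ x in -a..a, f x = 0 := by
  have h := intervalIntegral.integral_comp_neg (a := -a) (b := a) f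
  simp only [hf _, intervalIntegral.integral_neg, neg_neg] at h
  linarith

theorem integral_cos_int_mul (k : ℤ) :
    ∫ t in -π..π, cos (k * t) = if k = 0 then 2 * π else 0 := by
  split_ifs with hk
  · simp [hk]
    ring
  · rw [intervalIntegral.integral_comp_mul_left (fun x => cos x) (Int.cast_ne_zero.mpr hk),
      integral_cos, mul_neg, sin_neg, sin_int_mul_pi]
    simp

theorem integral_cos_nat_mul_mul_cos_nat_mul (j : ℕ) {k : ℕ} (hk : k ≠ 0) :
    ∫ t in -π..π, cos (j * t) * cos (k * t) = if j = k then π else 0 := by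
  have hprod : ∀ t : ℝ, cos (j * t) * cos (k * t)
      = (cos (((j - k : ℤ) : ℝ) * t) + cos (((j + k : ℤ) : ℝ) * t)) / 2 := by
    intro t
    push_cast
    rw [sub_mul, add_mul, cos_sub, cos_add]
    ring
  simp_rw [hprod]
  rw [intervalIntegral.integral_div, intervalIntegral.integral_add
    (Continuous.intervalIntegrable (by fun_prop) _ _)
    (Continuous.intervalIntegrable (by fun_prop) _ _),
    integral_cos_int_mul, integral_cos_int_mul, if_neg (show (j + k : ℤ) ≠ 0 by omega)]
  simp only [sub_eq_zero, Nat.cast_inj]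
  split_ifs <;> ring

theorem integral_sin_mul_mul_cos_mul (a b : ℝ) : ∫ t in -π..π, sin (a * t) * cos (b * t) = 0 :=
  Function.Odd.intervalIntegral_eq_zero (fun t => by simp [mul_neg, sin_neg, cos_neg]) π

theorem integral_sum_mul_cos_mul_cos (s : Finset ℕ) (c : ℕ → ℝ) {ν : ℕ} (hν : ν ∈ s)
    (hν0 : ν ≠ 0) :
    ∫ t in -π..π, (∑ μ ∈ s, c μ * cos (μ * t)) * cos (ν * t) = π * c ν := by
  simp_rw [Finset.sum_mul, mul_assoc]
  rw [intervalIntegral.integral_finsetSum fun μ _ =>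
    Continuous.intervalIntegrable (by fun_prop) _ _]
  simp_rw [intervalIntegral.integral_const_mul, integral_cos_nat_mul_mul_cos_nat_mul _ hν0,
    mul_ite, mul_zero, Finset.sum_ite_eq', if_pos hν, mul_comm]

theorem IsTrigPoly.continuous {m : ℕ} {T : ℝ → ℝ} (hT : IsTrigPoly m T) : Continuous T := by
  obtain ⟨a, b, hT⟩ := hT
  rw [funext hT]
  fun_prop

theorem IsTrigPoly.integral_mul_cos_eq_zero {m ν : ℕ} {T : ℝ → ℝ} (hT : IsTrigPoly m T)
    (hν : m < ν) : ∫ t in -π..π, T t * cos (ν * t) = 0 := by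
  obtain ⟨a, b, hT⟩ := hT
  have hν0 : ν ≠ 0 := by omega
  have hterm : ∀ k ∈ Icc 1 m,
      ∫ t in -π..π, (a k * cos (k * t) + b k * sin (k * t)) * cos (ν * t) = 0 := by
    intro k hk
    have hkν : k ≠ ν := by grind
    simp_rw [add_mul, mul_assoc]
    rw [intervalIntegral.integral_add (Continuous.intervalIntegrable (by fun_prop) _ _)
      (Continuous.intervalIntegrable (by fun_prop) _ _), intervalIntegral.integral_const_mul,
      intervalIntegral.integral_const_mul, integral_cos_nat_mul_mul_cos_nat_mul _ hν0, if_neg hkν,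
      integral_sin_mul_mul_cos_mul]
    simp
  simp_rw [hT, add_mul, Finset.sum_mul]
  rw [intervalIntegral.integral_add (Continuous.intervalIntegrable (by fun_prop) _ _)
    (Continuous.intervalIntegrable (by fun_prop) _ _),
    intervalIntegral.integral_finsetSum fun k _ => Continuous.intervalIntegrable (by fun_prop) _ _,
    Finset.sum_eq_zero hterm, intervalIntegral.integral_const_mul]
  simp [hν0]

theorem continuous_dirichletK (k : ℕ) : Continuous (dirichletK k) := by
  unfold dirichletK
  fun_prop

theorem abs_dirichletK_le (k : ℕ) (t : ℝ) : |dirichletK k t| ≤ k + 1 / 2 := by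
  calc |dirichletK k t| ≤ |1 / 2| + ∑ ν ∈ Icc 1 k, |cos (ν * t)| :=
        (abs_add_le _ _).trans (add_le_add le_rfl (Finset.abs_sum_le_sum_abs _ _))
    _ ≤ 1 / 2 + ∑ _ν ∈ Icc 1 k, (1 : ℝ) := by
        rw [abs_of_pos one_half_pos]
        gcongr with ν
        exact abs_cos_le_one _
    _ = k + 1 / 2 := by simp [add_comm]

theorem two_mul_sin_half_mul_dirichletK (k : ℕ) (t : ℝ) :
    2 * sin (t / 2) * dirichletK k t = sin ((k + 1 / 2) * t) := by
  induction k with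
  | zero =>
    simp [dirichletK]
    ring_nf
  | succ k ih =>
    rw [dirichletK, Finset.sum_Icc_succ_top (by omega), ← add_assoc, ← dirichletK, mul_add, ih]
    push_cast
    rw [show (k + 1 + 1 / 2) * t = (k + 1) * t + t / 2 by ring,
      show (k + 1 / 2) * t = (k + 1) * t - t / 2 by ring, sin_add, sin_sub]
    ring

theorem sq_two_mul_sin_half_mul_sum_dirichletK (m : ℕ) (t : ℝ) :
    (2 * sin (t / 2)) ^ 2 * ∑ k ∈ range m, dirichletK k t = 1 - cos (m * t) := by
  induction m with
  | zero => simp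
  | succ m ih =>
    rw [Finset.sum_range_succ, mul_add, ih, sq, mul_assoc, two_mul_sin_half_mul_dirichletK]
    push_cast
    rw [show (m : ℝ) * t = (m + 1 / 2) * t - t / 2 by ring,
      show (m + 1 : ℝ) * t = (m + 1 / 2) * t + t / 2 by ring, cos_sub, cos_add]
    ring

theorem sum_dirichletK_nonneg (m : ℕ) (t : ℝ) : 0 ≤ ∑ k ∈ range m, dirichletK k t := by
  rcases eq_or_ne (sin (t / 2)) 0 with hs | hs
  · obtain ⟨j, hj⟩ := sin_eq_zero_iff.mp hs
    have hcos : ∀ ν : ℕ, cos (ν * t) = 1 := fun ν => by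
      rw [show (ν : ℝ) * t = ((ν * j : ℤ) : ℝ) * (2 * π) by
        push_cast; linear_combination (-2 * ν : ℝ) * hj, cos_int_mul_two_pi]
    refine Finset.sum_nonneg fun k _ => ?_
    simp only [dirichletK, hcos]
    positivity
  · have h := sq_two_mul_sin_half_mul_sum_dirichletK m t
    have hpos : 0 < (2 * sin (t / 2)) ^ 2 := by positivity
    nlinarith [cos_le_one (m * t)]

theorem integral_dirichletK (k : ℕ) : ∫ t in -π..π, dirichletK k t = π := by
  unfold dirichletK
  rw [intervalIntegral.integral_add intervalIntegrable_const
      (Continuous.intervalIntegrable (by fun_prop) _ _),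
    intervalIntegral.integral_finsetSum fun ν _ => Continuous.intervalIntegrable (by fun_prop) _ _,
    Finset.sum_eq_zero fun ν hν => by simp [(by grind : ν ≠ 0)]]
  simp
  ring

theorem dirichletK_eq_sum_ite {k N : ℕ} (hk : k < N) (t : ℝ) :
    dirichletK k t = 1 / 2 + ∑ ν ∈ Ioo 0 N, if ν ≤ k then cos (ν * t) else 0 := by
  rw [dirichletK, ← Finset.sum_filter]
  congr 2
  ext ν
  simp only [mem_Icc, mem_filter, mem_Ioo]
  omega

theorem continuous_vallee (m : ℕ) : Continuous (vallee m) := by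
  unfold vallee
  have := continuous_dirichletK
  fun_prop

theorem abs_vallee_le (m : ℕ) (t : ℝ) : |vallee m t| ≤ 2 * m := by
  rcases Nat.eq_zero_or_pos m with rfl | hm
  · simp [vallee]
  have hm' : (0 : ℝ) < m := by exact_mod_cast hm
  have hD : ∀ k ∈ Icc m (2 * m - 1), |dirichletK k t| ≤ 2 * m := fun k hk => by
    have hk : (k : ℝ) + 1 ≤ 2 * m := by exact_mod_cast (by grind : k + 1 ≤ 2 * m)
    linarith [abs_dirichletK_le k t]
  calc |vallee m t| ≤ 1 / m * ∑ k ∈ Icc m (2 * m - 1), |dirichletK k t| := by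
        rw [vallee, abs_mul, abs_of_pos (by positivity)]
        gcongr
        exact Finset.abs_sum_le_sum_abs _ _
    _ ≤ 1 / m * (m * (2 * m)) := by
        gcongr
        simpa [show 2 * m - 1 + 1 - m = m by omega] using Finset.sum_le_card_nsmul _ _ _ hD
    _ = 2 * m := by field_simp

theorem vallee_eq_one_div_mul_sub (m : ℕ) (t : ℝ) :
    vallee m t = 1 / m * (∑ k ∈ range (2 * m), dirichletK k t - ∑ k ∈ range m, dirichletK k t) := by
  rcases Nat.eq_zero_or_pos m with rfl | hm
  · simp [vallee]
  rw [vallee, ← Finset.sum_range_add_sum_Ico _ (by omega : m ≤ 2 * m), add_sub_cancel_left,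
    show Icc m (2 * m - 1) = Ico m (2 * m) by ext; simp; omega]

theorem integral_abs_vallee_le (m : ℕ) : ∫ t in -π..π, |vallee m t| ≤ 3 * π := by
  have hcont := continuous_dirichletK
  have hbound : ∀ t, |vallee m t|
      ≤ 1 / m * (∑ k ∈ range (2 * m), dirichletK k t + ∑ k ∈ range m, dirichletK k t) := by
    intro t
    have h₁ := sum_dirichletK_nonneg (2 * m) t
    have h₂ := sum_dirichletK_nonneg m t
    rw [vallee_eq_one_div_mul_sub, abs_mul, abs_of_nonneg (by positivity)]
    gcongr
    exact abs_le.mpr ⟨by linarith, by linarith⟩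
  calc ∫ t in -π..π, |vallee m t|
      ≤ ∫ t in -π..π,
          1 / m * (∑ k ∈ range (2 * m), dirichletK k t + ∑ k ∈ range m, dirichletK k t) :=
        intervalIntegral.integral_mono (by linarith [pi_pos])
          ((continuous_vallee m).abs.intervalIntegrable _ _)
          (Continuous.intervalIntegrable (by fun_prop) _ _) hbound
    _ = 1 / m * (2 * m * π + m * π) := by
        rw [intervalIntegral.integral_const_mul, intervalIntegral.integral_add
            (Continuous.intervalIntegrable (by fun_prop) _ _)
            (Continuous.intervalIntegrable (by fun_prop) _ _),
          intervalIntegral.integral_finsetSum fun k _ => (hcont k).intervalIntegrable _ _,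
          intervalIntegral.integral_finsetSum fun k _ => (hcont k).intervalIntegrable _ _]
        simp [integral_dirichletK]
    _ ≤ 3 * π := by
        rcases Nat.eq_zero_or_pos m with rfl | hm
        · simp [pi_pos.le]
        · exact le_of_eq (by field_simp; ring)

theorem toReal_eLpNorm_vallee_two_mul_sub_vallee_le (n : ℕ) {q : ℝ} (hq : 1 ≤ q) :
    (eLpNorm (fun t => vallee (2 * n) t - vallee n t) (ENNReal.ofReal q)
      (volume.restrict (Set.Ioc (-π) π))).toReal ≤ (6 * n) ^ (1 - 1 / q) * (6 * π) ^ (1 / q) := by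
  have hcont := continuous_vallee
  refine toReal_eLpNorm_le_of_norm_le_of_integral_norm_le (by fun_prop) hq (by positivity)
    (ae_of_all _ fun t => ?_) ?_
  · have h₁ := abs_vallee_le (2 * n) t
    have h₂ := abs_vallee_le n t
    rw [Real.norm_eq_abs]
    push_cast at h₁
    linarith [abs_sub (vallee (2 * n) t) (vallee n t)]
  · simp_rw [Real.norm_eq_abs, ← intervalIntegral.integral_of_le (neg_le_self pi_pos.le)]
    calc ∫ t in -π..π, |vallee (2 * n) t - vallee n t|
        ≤ ∫ t in -π..π, (|vallee (2 * n) t| + |vallee n t|) :=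
          intervalIntegral.integral_mono (neg_le_self pi_pos.le)
            (Continuous.intervalIntegrable (by fun_prop) _ _)
            (Continuous.intervalIntegrable (by fun_prop) _ _) fun t => abs_sub _ _
      _ ≤ 3 * π + 3 * π := by
          rw [intervalIntegral.integral_add (Continuous.intervalIntegrable (by fun_prop) _ _)
            (Continuous.intervalIntegrable (by fun_prop) _ _)]
          exact add_le_add (integral_abs_vallee_le _) (integral_abs_vallee_le _)
      _ = 6 * π := by ring

/-- Cosine coefficients of `V_m`: `1` up to frequency `m`, then linear down to `0` at `2m`. -/
noncomputable def valleeCoeff (m ν : ℕ) : ℝ :=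
  ((2 * m - max m ν : ℕ) : ℝ) / m

theorem valleeCoeff_of_le {m ν : ℕ} (hm : m ≠ 0) (hν : ν ≤ m) : valleeCoeff m ν = 1 := by
  rw [valleeCoeff, max_eq_left hν, show 2 * m - m = m by omega]
  exact div_self (Nat.cast_ne_zero.mpr hm)

theorem valleeCoeff_of_two_mul_le {m ν : ℕ} (hν : 2 * m ≤ ν) : valleeCoeff m ν = 0 := by
  rw [valleeCoeff, show 2 * m - max m ν = 0 by omega, Nat.cast_zero, zero_div]

theorem one_half_le_valleeCoeff_two_mul {n ν : ℕ} (hn : n ≠ 0) (hν : ν ≤ 3 * n) :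
    1 / 2 ≤ valleeCoeff (2 * n) ν := by
  have hn' : (0 : ℝ) < n := by positivity
  have hnum : (n : ℝ) ≤ ((2 * (2 * n) - max (2 * n) ν : ℕ) : ℝ) := by
    exact_mod_cast (by omega : n ≤ 2 * (2 * n) - max (2 * n) ν)
  rw [valleeCoeff, le_div_iff₀ (by positivity)]
  push_cast at hnum ⊢
  linarith

theorem vallee_eq_sum_cos {m N : ℕ} (hm : m ≠ 0) (hN : 2 * m ≤ N) (t : ℝ) :
    vallee m t = 1 / 2 + ∑ ν ∈ Ioo 0 N, valleeCoeff m ν * cos (ν * t) := by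
  have hcount : ∀ ν, ∑ k ∈ Icc m (2 * m - 1), (if ν ≤ k then cos (ν * t) else 0)
      = (2 * m - max m ν : ℕ) * cos (ν * t) := by
    intro ν
    rw [← Finset.sum_filter, Finset.sum_const, nsmul_eq_mul,
      show (Icc m (2 * m - 1)).filter (ν ≤ ·) = Icc (max m ν) (2 * m - 1) by ext; simp; omega,
      Nat.card_Icc, show 2 * m - 1 + 1 - max m ν = 2 * m - max m ν by omega]
  rw [vallee, Finset.sum_congr rfl fun k hk => dirichletK_eq_sum_ite (N := N) (by grind) t,
    Finset.sum_add_distrib, Finset.sum_comm, Finset.sum_congr rfl fun ν _ => hcount ν,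
    Finset.sum_const, Nat.card_Icc, show 2 * m - 1 + 1 - m = m by omega, mul_add, Finset.mul_sum]
  simp only [valleeCoeff, nsmul_eq_mul]
  congr 1
  · field_simp
  · exact Finset.sum_congr rfl fun ν _ => by ring

theorem vallee_two_mul_sub_vallee_eq_sum_cos {n : ℕ} (hn : n ≠ 0) (t : ℝ) :
    vallee (2 * n) t - vallee n t
      = ∑ ν ∈ Ioo n (4 * n), (valleeCoeff (2 * n) ν - valleeCoeff n ν) * cos (ν * t) := by
  rw [vallee_eq_sum_cos (N := 4 * n) (by omega) (by omega),
    vallee_eq_sum_cos (N := 4 * n) hn (by omega), add_sub_add_left_eq_sub,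
    ← Finset.sum_sub_distrib]
  rw [← Finset.sum_subset (Ioo_subset_Ioo_left n.zero_le) fun ν hν hνn => ?_]
  · exact Finset.sum_congr rfl fun ν _ => by ring
  · simp only [mem_Ioo, not_and, not_lt] at hν hνn
    have hνle : ν ≤ n := by omega
    rw [valleeCoeff_of_le (by omega) (by omega), valleeCoeff_of_le hn hνle]
    ring

theorem integral_vallee_sub_sub_mul_vallee_sub {n : ℕ} (hn : n ≠ 0) {T : ℝ → ℝ}
    (hT : IsTrigPoly (n - 1) T) :
    ∫ t in -π..π, (vallee (2 * n) t - vallee n t - T t) * (vallee (2 * n) t - vallee n t)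
      = π * ∑ ν ∈ Ioo n (4 * n), (valleeCoeff (2 * n) ν - valleeCoeff n ν) ^ 2 := by
  have hF := vallee_two_mul_sub_vallee_eq_sum_cos hn
  have hcont := continuous_vallee
  have hTcont := hT.continuous
  have hcoeff : ∀ ν ∈ Ioo n (4 * n),
      ∫ t in -π..π, (vallee (2 * n) t - vallee n t - T t) * cos (ν * t)
        = π * (valleeCoeff (2 * n) ν - valleeCoeff n ν) := by
    intro ν hν
    have hνn : n - 1 < ν := by grind
    simp_rw [sub_mul _ (T _)]
    rw [intervalIntegral.integral_sub (Continuous.intervalIntegrable (by fun_prop) _ _)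
      (Continuous.intervalIntegrable (by fun_prop) _ _), hT.integral_mul_cos_eq_zero hνn, sub_zero]
    simp_rw [hF]
    exact integral_sum_mul_cos_mul_cos _ _ hν (by grind)
  have hsplit : ∀ t, (vallee (2 * n) t - vallee n t - T t) * (vallee (2 * n) t - vallee n t)
      = ∑ ν ∈ Ioo n (4 * n), (valleeCoeff (2 * n) ν - valleeCoeff n ν)
          * ((vallee (2 * n) t - vallee n t - T t) * cos (ν * t)) := by
    intro t
    nth_rewrite 2 [hF t]
    rw [Finset.mul_sum]
    exact Finset.sum_congr rfl fun _ _ => by ring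
  simp_rw [hsplit]
  rw [intervalIntegral.integral_finsetSum fun ν _ =>
    Continuous.intervalIntegrable (by fun_prop) _ _, Finset.mul_sum]
  refine Finset.sum_congr rfl fun ν hν => ?_
  rw [intervalIntegral.integral_const_mul, hcoeff ν hν]
  ring

theorem div_four_le_sum_sq_valleeCoeff_sub {n : ℕ} (hn : n ≠ 0) :
    (n : ℝ) / 4 ≤ ∑ ν ∈ Ioo n (4 * n), (valleeCoeff (2 * n) ν - valleeCoeff n ν) ^ 2 := by
  calc (n : ℝ) / 4 ≤ ∑ _ν ∈ Icc (2 * n) (3 * n), (1 / 2 : ℝ) ^ 2 := by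
        rw [Finset.sum_const, Nat.card_Icc, nsmul_eq_mul, show 3 * n + 1 - 2 * n = n + 1 by omega]
        push_cast
        linarith
    _ ≤ ∑ ν ∈ Icc (2 * n) (3 * n), (valleeCoeff (2 * n) ν - valleeCoeff n ν) ^ 2 := by
        refine Finset.sum_le_sum fun ν hν => ?_
        rw [mem_Icc] at hν
        rw [valleeCoeff_of_two_mul_le hν.1, sub_zero]
        exact pow_le_pow_left₀ (by norm_num) (one_half_le_valleeCoeff_two_mul hn hν.2) 2
    _ ≤ ∑ ν ∈ Ioo n (4 * n), (valleeCoeff (2 * n) ν - valleeCoeff n ν) ^ 2 :=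
        Finset.sum_le_sum_of_subset_of_nonneg (fun ν hν => by simp at hν ⊢; omega)
          fun _ _ _ => sq_nonneg _

theorem pi_mul_div_four_le_qnorm_vallee_sub_sub_mul {p : ℝ≥0∞} {p' : ℝ} (hp : 1 < p)
    (hpp' : 1 / p.toReal + 1 / p' = 1) {n : ℕ} (hn : n ≠ 0) {T : ℝ → ℝ}
    (hT : IsTrigPoly (n - 1) T) :
    π * n / 4 ≤ qnorm p (fun t => vallee (2 * n) t - vallee n t - T t)
      * ((6 * n) ^ (1 / p.toReal) * (6 * π) ^ (1 / p')) := by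
  have := ENNReal.holderConjugate_ofReal hp hpp'
  have hp' := one_le_of_one_div_toReal_add_one_div_eq_one hp hpp'
  have hF : Continuous fun t => vallee (2 * n) t - vallee n t := by
    have := continuous_vallee
    fun_prop
  have hnorm := toReal_eLpNorm_vallee_two_mul_sub_vallee_le n hp'
  rw [show 1 - 1 / p' = 1 / p.toReal by linarith] at hnorm
  calc π * n / 4
      ≤ π * ∑ ν ∈ Ioo n (4 * n), (valleeCoeff (2 * n) ν - valleeCoeff n ν) ^ 2 := by
        rw [mul_div_assoc]
        exact mul_le_mul_of_nonneg_left (div_four_le_sum_sq_valleeCoeff_sub hn) pi_pos.le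
    _ = ∫ t, (vallee (2 * n) t - vallee n t - T t) * (vallee (2 * n) t - vallee n t)
          ∂volume.restrict (Set.Ioc (-π) π) := by
        rw [← integral_vallee_sub_sub_mul_vallee_sub hn hT,
          intervalIntegral.integral_of_le (neg_le_self pi_pos.le)]
    _ ≤ qnorm p (fun t => vallee (2 * n) t - vallee n t - T t)
          * (eLpNorm (fun t => vallee (2 * n) t - vallee n t) (ENNReal.ofReal p')
            (volume.restrict (Set.Ioc (-π) π))).toReal :=
        integral_mul_le_toReal_eLpNorm_mul_toReal_eLpNorm
          ((hF.sub hT.continuous).memLp_restrict_Ioc p (-π) π) (hF.memLp_restrict_Ioc _ (-π) π)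
    _ ≤ _ := mul_le_mul_of_nonneg_left hnorm ENNReal.toReal_nonneg

/-- Let `1 < p ≤ ∞` and `1/p + 1/p' = 1`.  There is a constant `c_p > 0`
depending only on `p` such that for every `n ≥ 1` and every trigonometric polynomial
`T` of degree at most `n−1`: `‖(V_{2n} − V_n) − T‖_p ≥ c_p·n^{1/p'}`. -/
theorem vallee_diff_far_from_trigpoly_Lp (p : ENNReal) (hp : 1 < p) (p' : ℝ)
    (hpp' : 1 / p.toReal + 1 / p' = 1) :
    ∃ c : ℝ, 0 < c ∧ ∀ n : ℕ, 1 ≤ n → ∀ T : ℝ → ℝ, IsTrigPoly (n - 1) T →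
      c * (n : ℝ) ^ (1 / p') ≤ qnorm p (fun t => vallee (2 * n) t - vallee n t - T t) := by
  refine ⟨π ^ (1 / p.toReal) / 24, by positivity, fun n hn T hT => ?_⟩
  have hn' : (0 : ℝ) < n := by exact_mod_cast hn
  refine le_of_mul_le_mul_right ?_
    (by positivity : 0 < (6 * n) ^ (1 / p.toReal) * (6 * π) ^ (1 / p'))
  calc π ^ (1 / p.toReal) / 24 * n ^ (1 / p') * ((6 * n) ^ (1 / p.toReal) * (6 * π) ^ (1 / p'))
      = (6 ^ (1 / p.toReal) * 6 ^ (1 / p')) * (n ^ (1 / p.toReal) * n ^ (1 / p'))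
          * (π ^ (1 / p.toReal) * π ^ (1 / p')) / 24 := by
        rw [mul_rpow (by norm_num) hn'.le, mul_rpow (by norm_num) pi_pos.le]
        ring
    _ = π * n / 4 := by
        rw [rpow_mul_rpow_of_add_eq_one (by norm_num) hpp', rpow_mul_rpow_of_add_eq_one hn' hpp',
          rpow_mul_rpow_of_add_eq_one pi_pos hpp']
        ring
    _ ≤ _ := pi_mul_div_four_le_qnorm_vallee_sub_sub_mul hp hpp' (by omega) hT
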